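/- arXiv:1010.2604 — 2 statements merged into one kernel-verified Lean document; each statement's English description precedes it below -/
import Mathlib

section
/- For pres e1, e2: L_p(e1 ⊙ e2) = L_p(e1)·L(|e2|) ∪ L_p(e2), where ⊙ is the lifted concatenation. -/
/-! Broadcasting a point through `e` adds exactly the carrier language:
`L_p(•e) = L(|e|) ∪ L_p(e)`, by induction on `e`. Given this, the case of `⊙` with a pointed
first operand is distributivity of concatenation over union. The one non-algebraic step is the
star case, which needs `L(|e|)* ⊆ L_p(•e)·L(|e|)* ∪ {ε}`: a nonempty word of `L(|e|)*` begins
with a nonempty factor from `L(|e|) ⊆ L_p(•e) ∪ {ε}`. -/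

namespace PointedRE

inductive PItem (α : Type) : Type
  | empty : PItem α
  | eps : PItem α
  | ch : α → PItem α
  | pch : α → PItem α
  | plus : PItem α → PItem α → PItem α
  | cat : PItem α → PItem α → PItem α
  | star : PItem α → PItem α

namespace PItem

variable {α : Type}

/-- The carrier: erase all points. -/
def carrier : PItem α → RegularExpression α
  | empty => 0
  | eps => 1
  | ch a => RegularExpression.char a
  | pch a => RegularExpression.char a
  | plus e1 e2 => carrier e1 + carrier e2
  | cat e1 e2 => carrier e1 * carrier e2
  | star e => (carrier e).star

/-- ε(b) : {ε} if b, ∅ otherwise. -/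
def ebool (b : Bool) : Language α := if b then 1 else 0

/-- The pointed language of a pointed item. -/
def Lp : PItem α → Language α
  | empty => 0
  | eps => 0
  | ch _ => 0
  | pch a => {[a]}
  | plus e1 e2 => Lp e1 + Lp e2
  | cat e1 e2 => Lp e1 * (carrier e2).matches' + Lp e2
  | star e => Lp e * KStar.kstar (carrier e).matches'

/-- A pointed regular expression (pre): a pointed item with a trailing boolean. -/
abbrev Pre (α : Type) := PItem α × Bool

/-- The pointed language of a pre. -/
def LpP (p : Pre α) : Language α := Lp p.1 + ebool p.2

/-- Broadcasting a point inside a pointed item. -/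
def broadcast : PItem α → Pre α
  | empty => (empty, false)
  | eps => (eps, true)
  | ch a => (pch a, false)
  | pch a => (pch a, false)
  | plus e1 e2 =>
      (plus (broadcast e1).1 (broadcast e2).1, (broadcast e1).2 || (broadcast e2).2)
  | cat e1 e2 =>
      if (broadcast e1).2 then
        (cat (broadcast e1).1 (broadcast e2).1, (broadcast e2).2)
      else (cat (broadcast e1).1 e2, false)
  | star e => (star (broadcast e).1, true)

/-- Lifted sum on pres. -/
def oplus (p1 p2 : Pre α) : Pre α := (plus p1.1 p2.1, p1.2 || p2.2)

/-- Lifted concatenation on pres. -/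
def odot (p1 p2 : Pre α) : Pre α :=
  if p1.2 then (cat p1.1 (broadcast p2.1).1, p2.2 || (broadcast p2.1).2)
  else (cat p1.1 p2.1, p2.2)

/-- Lifted Kleene star on pres. -/
def ostar (p : Pre α) : Pre α :=
  if p.2 then (star (broadcast p.1).1, true) else (star p.1, false)

/-- Broadcasting extended to pres. -/
def broadcastP (p : Pre α) : Pre α :=
  ((broadcast p.1).1, p.2 || (broadcast p.1).2)

/-- The move operation on pointed items. -/
def move [DecidableEq α] (a : α) : PItem α → Pre α
  | empty => (empty, false)
  | eps => (eps, false)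
  | ch b => (ch b, false)
  | pch b => if b = a then (ch b, true) else (ch b, false)
  | plus e1 e2 => oplus (move a e1) (move a e2)
  | cat e1 e2 => odot (move a e1) (move a e2)
  | star e => ostar (move a e)

/-- The move operation iterated along a string (on pres, ignoring the trailing point). -/
def moves [DecidableEq α] : Pre α → List α → Pre α
  | p, [] => p
  | p, a :: w => moves (move a p.1) w

/-- Embedding of regular expressions as point-free pointed items. -/
def embed : RegularExpression α → PItem α
  | .zero => empty
  | .epsilon => eps
  | .char a => ch a
  | .plus e1 e2 => plus (embed e1) (embed e2)
  | .comp e1 e2 => cat (embed e1) (embed e2)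
  | .star e => star (embed e)

/-- Read-back of a pointed item as a set of regular expressions. -/
def R : PItem α → Set (RegularExpression α)
  | empty => ∅
  | eps => ∅
  | ch _ => ∅
  | pch a => {RegularExpression.char a}
  | plus e1 e2 => R e1 ∪ R e2
  | cat e1 e2 => (fun r => r * carrier e2) '' R e1 ∪ R e2
  | star e => (fun r => r * (carrier e).star) '' R e

/-- Read-back of a pre. -/
def RP (p : Pre α) : Set (RegularExpression α) :=
  R p.1 ∪ (if p.2 then {1} else ∅)

/-- The language of a set of regular expressions. -/
def LS (S : Set (RegularExpression α)) : Language α :=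
  {w | ∃ r ∈ S, w ∈ r.matches'}

/-- The look-ahead normal form of a regular expression (without ε). -/
def nf : RegularExpression α → Set (RegularExpression α)
  | .zero => ∅
  | .epsilon => ∅
  | .char a => {RegularExpression.char a}
  | .plus e1 e2 => nf e1 ∪ nf e2
  | .comp e1 e2 =>
      if e1.matchEpsilon then (fun r => r * e2) '' nf e1 ∪ nf e2
      else (fun r => r * e2) '' nf e1
  | .star e => (fun r => r * e.star) '' nf e

/-- The look-ahead normal form with ε added when the expression is nullable. -/
def nfe (e : RegularExpression α) : Set (RegularExpression α) :=
  nf e ∪ (if e.matchEpsilon then {1} else ∅)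

/-- nf_ε lifted to sets of regular expressions. -/
def nfeS (S : Set (RegularExpression α)) : Set (RegularExpression α) :=
  ⋃ r ∈ S, nfe r

/-- Merge of two pointed items (meaningful when they share the same carrier). -/
def merge : PItem α → PItem α → PItem α
  | ch a, pch _ => pch a
  | plus e1 e2, plus f1 f2 => plus (merge e1 f1) (merge e2 f2)
  | cat e1 e2, cat f1 f2 => cat (merge e1 f1) (merge e2 f2)
  | star e, star f => star (merge e f)
  | e, _ => e

/-- Merge extended to pres. -/
def mergeP (p q : Pre α) : Pre α := (merge p.1 q.1, p.2 || q.2)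

end PItem
end PointedRE

open PointedRE PItem

namespace Language

open Computability

variable {α : Type*}

theorem kstar_le_mul_kstar_add_one {l m : Language α} (h : l ≤ m + 1) : l∗ ≤ m * l∗ + 1 := by
  intro w hw
  obtain ⟨S, rfl, hS⟩ := mem_kstar_iff_exists_nonempty.mp hw
  cases S with
  | nil => exact Or.inr rfl
  | cons y t =>
    obtain ⟨hyl, hy⟩ := hS y List.mem_cons_self
    have hym : y ∈ m := (h hyl).resolve_right hy
    exact Or.inl <| append_mem_mul hym <|
      join_mem_kstar fun z hz => (hS z (List.mem_cons_of_mem _ hz)).1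

end Language

namespace PointedRE.PItem

open RegularExpression Computability

variable {α : Type}

@[simp] theorem ebool_true : (ebool true : Language α) = 1 := rfl

@[simp] theorem ebool_false : (ebool false : Language α) = 0 := rfl

theorem ebool_le_one (b : Bool) : (ebool b : Language α) ≤ 1 := by
  cases b <;> simp

theorem ebool_or (a b : Bool) : (ebool (a || b) : Language α) = ebool a + ebool b := by
  cases a <;> cases b <;> simp

theorem LpP_mk (e : PItem α) (b : Bool) : LpP (e, b) = Lp e + ebool b := rfl

@[simp] theorem carrier_broadcast (e : PItem α) : carrier (broadcast e).1 = carrier e := by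
  induction e with
  | plus e1 e2 ih1 ih2 => simp [broadcast, carrier, ih1, ih2]
  | cat e1 e2 ih1 ih2 => by_cases h : (broadcast e1).2 <;> simp [broadcast, h, carrier, ih1, ih2]
  | star e ih => simp [broadcast, carrier, ih]
  | _ => rfl

theorem LpP_broadcast (e : PItem α) : LpP (broadcast e) = (carrier e).matches' + Lp e := by
  induction e with
  | empty | eps | ch _ | pch _ => simp [broadcast, LpP, Lp, carrier]
  | plus e1 e2 ih1 ih2 =>
    simp only [LpP, broadcast, Lp, carrier, matches'_add, ebool_or] at ih1 ih2 ⊢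
    rw [add_add_add_comm, ih1, ih2, add_add_add_comm]
  | cat e1 e2 ih1 ih2 =>
    simp only [LpP] at ih1 ih2
    cases h : (broadcast e1).2
    · simp only [h, ebool_false, add_zero] at ih1
      simp only [broadcast, h, Bool.false_eq_true, if_false, LpP_mk, Lp, carrier, matches'_mul,
        ebool_false, add_zero]
      rw [ih1, add_mul, add_assoc]
    · simp only [h, ebool_true] at ih1
      simp only [broadcast, h, if_true, LpP_mk, Lp, carrier, carrier_broadcast, matches'_mul]
      rw [add_assoc, ih2, ← add_assoc, ← add_one_mul, ih1, add_mul, add_assoc]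
  | star e ih =>
    simp only [LpP] at ih
    set P := Lp (broadcast e).1
    set M := (carrier e).matches'
    have hPML : P ≤ M + Lp e := ih ▸ le_self_add
    have hML : M + Lp e ≤ P + 1 := ih ▸ add_le_add le_rfl (ebool_le_one _)
    simp only [broadcast, LpP_mk, Lp, carrier, carrier_broadcast, matches'_star, ebool_true]
    have hM : M∗ ≤ P * M∗ + 1 := Language.kstar_le_mul_kstar_add_one (le_self_add.trans hML)
    refine le_antisymm (add_le ?_ (one_le_kstar.trans le_self_add)) (add_le hM ?_)
    · calc P * M∗ ≤ (M + Lp e) * M∗ := mul_le_mul_left hPML _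
        _ ≤ M∗ + Lp e * M∗ := by rw [add_mul]; exact add_le_add mul_kstar_le_kstar le_rfl
    · calc Lp e * M∗ ≤ (P + 1) * M∗ := mul_le_mul_left (le_add_self.trans hML) _
        _ = P * M∗ + M∗ := add_one_mul _ _
        _ ≤ P * M∗ + 1 := add_le le_self_add hM

end PointedRE.PItem

/-- L_p(e1 ⊙ e2) = L_p(e1)·L(|e2|) ∪ L_p(e2). -/
theorem stmt4 {α : Type} (p1 p2 : Pre α) :
    LpP (odot p1 p2) = LpP p1 * (carrier p2.1).matches' + LpP p2 := by
  obtain ⟨e1, b1⟩ := p1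
  obtain ⟨e2, b2⟩ := p2
  cases b1
  · simp only [odot, Bool.false_eq_true, if_false, LpP_mk, Lp, ebool_false, add_zero, add_assoc]
  · calc LpP (odot (e1, true) (e2, b2))
        = Lp e1 * (carrier e2).matches' + LpP (broadcast e2) + ebool b2 := by
          simp only [odot, if_true, LpP, Lp, carrier_broadcast, ebool_or]; abel
      _ = (Lp e1 + 1) * (carrier e2).matches' + (Lp e2 + ebool b2) := by
          rw [LpP_broadcast, add_one_mul]; abel
end

section
/- For every regular expression e, L(e) = L(nf_ε(e)), where nf_ε(e) is the look-ahead normal form of e. -/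
open PointedRE PItem

/-! Write `L - 1` for the nonempty words of a language `L`. By induction on `e`,
`L(nf e) = L(e) - 1`: the clauses of `nf` mirror the identities
`L M - 1 = (L - 1) M + (M - 1)` if `ε ∈ L`, `L M - 1 = (L - 1) M` otherwise,
and `L∗ - 1 = (L - 1) L∗`. Adding `ε` back exactly when `e` is nullable recovers `L(e)`. -/

namespace Language

open scoped Computability

variable {α : Type} {L M : Language α}

theorem add_sub_one (L M : Language α) : L + M - 1 = (L - 1) + (M - 1) :=
  Set.union_sdiff_distrib

theorem sub_one_eq_self (hL : [] ∉ L) : L - 1 = L :=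
  Set.sdiff_singleton_eq_self hL

theorem sub_one_add_one (hL : [] ∈ L) : L - 1 + 1 = L :=
  tsub_add_cancel_of_le (Set.singleton_subset_iff.mpr hL)

theorem mul_sub_one_of_nil_mem (hL : [] ∈ L) : L * M - 1 = (L - 1) * M + (M - 1) := by
  ext w
  simp only [mem_sub, mem_add, mem_mul, mem_one]
  constructor
  · rintro ⟨⟨u, hu, v, hv, rfl⟩, huv⟩
    rcases eq_or_ne u [] with rfl | hu'
    · exact Or.inr ⟨hv, huv⟩
    · exact Or.inl ⟨u, ⟨hu, hu'⟩, v, hv, rfl⟩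
  · rintro (⟨u, ⟨hu, hu'⟩, v, hv, rfl⟩ | ⟨hw, hw'⟩)
    · exact ⟨⟨u, hu, v, hv, rfl⟩, by simp [hu']⟩
    · exact ⟨⟨[], hL, w, hw, rfl⟩, hw'⟩

theorem mul_sub_one_of_nil_notMem (hL : [] ∉ L) : L * M - 1 = (L - 1) * M := by
  have hLM : [] ∉ L * M := fun h => by
    obtain ⟨u, hu, v, -, huv⟩ := mem_mul.mp h
    exact hL ((List.append_eq_nil_iff.mp huv).1 ▸ hu)
  rw [sub_one_eq_self hL, sub_one_eq_self hLM]

theorem kstar_sub_one (L : Language α) : L∗ - 1 = (L - 1) * L∗ := by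
  ext w
  simp only [mem_sub, mem_mul, mem_one]
  constructor
  · rintro ⟨hw, hw'⟩
    obtain ⟨_ | ⟨u, us⟩, rfl, hus⟩ := mem_kstar_iff_exists_nonempty.mp hw
    · exact absurd rfl hw'
    · exact ⟨u, hus u List.mem_cons_self, us.flatten,
        join_mem_kstar fun v hv => (hus v (List.mem_cons_of_mem u hv)).1, rfl⟩
  · rintro ⟨u, ⟨hu, hu'⟩, v, hv, rfl⟩
    refine ⟨?_, by simp [hu']⟩
    obtain ⟨vs, rfl, hvs⟩ := mem_kstar.mp hv
    exact mem_kstar.mpr ⟨u :: vs, rfl, List.forall_mem_cons.mpr ⟨hu, hvs⟩⟩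

end Language

namespace RegularExpression

variable {α : Type}

theorem matchEpsilon_iff_nil_mem (r : RegularExpression α) :
    r.matchEpsilon ↔ [] ∈ r.matches' := by
  classical
  exact rmatch_iff_matches' r []

end RegularExpression

namespace PointedRE.PItem

variable {α : Type}

theorem mem_LS {S : Set (RegularExpression α)} {w : List α} :
    w ∈ LS S ↔ ∃ r ∈ S, w ∈ r.matches' :=
  Iff.rfl

theorem LS_empty : LS (∅ : Set (RegularExpression α)) = 0 := by
  ext w
  simp [mem_LS, Language.notMem_zero]

theorem LS_singleton (r : RegularExpression α) : LS {r} = r.matches' := by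
  ext w
  simp [mem_LS]

theorem LS_union (S T : Set (RegularExpression α)) : LS (S ∪ T) = LS S + LS T := by
  ext w
  simp only [mem_LS, Set.mem_union, Language.mem_add, or_and_right, exists_or]

theorem LS_image_mul (S : Set (RegularExpression α)) (e : RegularExpression α) :
    LS ((· * e) '' S) = LS S * e.matches' := by
  ext w
  simp only [mem_LS, Set.exists_mem_image, RegularExpression.matches'_mul, Language.mem_mul]
  grind

theorem LS_nf (r : RegularExpression α) : LS (nf r) = r.matches' - 1 := by
  induction r with
  | zero => exact LS_empty.trans (Set.empty_sdiff _).symm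
  | epsilon => exact LS_empty.trans Set.sdiff_self.symm
  | char a =>
    exact (LS_singleton _).trans (Language.sub_one_eq_self (List.cons_ne_nil a []).symm).symm
  | plus P Q ihP ihQ =>
    rw [nf, LS_union, ihP, ihQ]
    exact (Language.add_sub_one _ _).symm
  | comp P Q ihP ihQ =>
    rw [nf]
    split_ifs with hP
    · rw [LS_union, LS_image_mul, ihP, ihQ]
      exact (Language.mul_sub_one_of_nil_mem (P.matchEpsilon_iff_nil_mem.mp hP)).symm
    · rw [LS_image_mul, ihP]
      exact (Language.mul_sub_one_of_nil_notMem (mt P.matchEpsilon_iff_nil_mem.mpr hP)).symm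
  | star P ih =>
    rw [nf, LS_image_mul, ih]
    exact (Language.kstar_sub_one _).symm

end PointedRE.PItem

/-- L(e) = L(nf_ε(e)). -/
theorem stmt14 {α : Type} (r : RegularExpression α) :
    r.matches' = LS (nfe r) := by
  rw [nfe, LS_union, LS_nf]
  split_ifs with h
  · rw [LS_singleton, RegularExpression.matches'_epsilon,
      Language.sub_one_add_one (r.matchEpsilon_iff_nil_mem.mp h)]
  · rw [LS_empty, add_zero, Language.sub_one_eq_self (mt r.matchEpsilon_iff_nil_mem.mpr h)]
end
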